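/- arXiv:1906.06099 — 4 statements merged into one kernel-verified Lean document; each statement's English description precedes it below -/
import Mathlib

section
/- Let Y be an Abelian group and suppose real-valued functions ψ₁,…,ψₙ on Y satisfy ∑ⱼ ψⱼ(aⱼu + bⱼv) = ∑ⱼ ψⱼ(aⱼu − bⱼv) for all u, v ∈ Y, where aⱼ, bⱼ are integers. Then for arbitrary h₁,…,hₙ, k₂,…,kₙ ∈ Y, the function ψ₁ satisfies Δ_{m₂₁k₂}⋯Δ_{mₙ₁kₙ} Δ_{l₁₁h₁}⋯Δ_{lₙ₁hₙ} ψ₁(a₁u) = 0 for all u ∈ Y, where l_{ij} = aⱼbᵢ + bⱼaᵢ, m_{ij} = aⱼbᵢ − bⱼaᵢ, and Δ_h f(y) = f(y+h) − f(y) is the finite difference operator. -/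
/-!
Put `F (u, v) = ∑ j, ψ j (a j • u + b j • v) - ∑ j, ψ j (a j • u - b j • v)`, which vanishes on
`Y × Y`. Differencing `g ∘ L` with `L` additive along increments `w` is differencing `g` along
the `L w`, so it vanishes as soon as one `L w` is zero. The increments `(b i • k i, -a i • k i)`
(`i ≠ 1`) and `(b i • h i, a i • h i)` lie in the kernels of `(u, v) ↦ a i • u + b i • v` and of
`(u, v) ↦ a i • u - b i • v` respectively, so differencing `F` along all of them leaves only the
term `ψ₁ (a₁ • u + b₁ • v)`, whose increments become `m_{i1} • k i` and `l_{i1} • h i`.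
Evaluating at `(u, 0)` gives the claim.
-/

/-- The finite difference operator `Δ_h f(y) = f(y+h) - f(y)`. -/
def finDiff {Y : Type*} [Add Y] (h : Y) (f : Y → ℝ) : Y → ℝ :=
  fun y => f (y + h) - f y

/-- Composition of finite difference operators along a list of increments. -/
def finDiffComp {Y : Type*} [Add Y] (ops : List Y) (f : Y → ℝ) : Y → ℝ :=
  ops.foldr finDiff f

theorem List.apply_mem_tail_ofFn {α : Type*} {n : ℕ} (f : Fin n → α) {j : Fin n}
    (hj : (j : ℕ) ≠ 0) : f j ∈ (List.ofFn f).tail := by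
  cases n with
  | zero => exact j.elim0
  | succ m =>
    obtain ⟨i, rfl⟩ := Fin.exists_succ_eq.2 (Fin.val_ne_zero_iff.1 hj)
    rw [List.ofFn_succ, List.tail_cons]
    exact List.mem_ofFn.2 ⟨i, rfl⟩

section FinDiff

variable {Y Y' : Type*}

@[simp]
theorem finDiffComp_cons [Add Y] (s : Y) (ops : List Y) (f : Y → ℝ) :
    finDiffComp (s :: ops) f = finDiff s (finDiffComp ops f) := rfl

@[simp]
theorem finDiffComp_zero [Add Y] (ops : List Y) : finDiffComp ops (0 : Y → ℝ) = 0 := by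
  induction ops with
  | nil => rfl
  | cons s ops ih => ext y; simp [ih, finDiff]

theorem finDiffComp_eq_zero_of_zero_mem [AddZeroClass Y] {ops : List Y} (h0 : (0 : Y) ∈ ops)
    (f : Y → ℝ) : finDiffComp ops f = 0 := by
  induction ops with
  | nil => simp at h0
  | cons s ops ih =>
    ext y
    rcases List.mem_cons.1 h0 with rfl | h0
    · simp [finDiff]
    · simp [ih h0, finDiff]

theorem finDiffComp_sum [Add Y] {ι : Type*} (s : Finset ι) (ops : List Y) (f : ι → Y → ℝ)
    (y : Y) : finDiffComp ops (fun y => ∑ i ∈ s, f i y) y = ∑ i ∈ s, finDiffComp ops (f i) y := by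
  induction ops generalizing y with
  | nil => rfl
  | cons t ops ih => simp [ih, finDiff, Finset.sum_sub_distrib]

theorem finDiffComp_comp_addMonoidHom [AddZeroClass Y] [AddZeroClass Y'] (L : Y' →+ Y)
    (ops : List Y') (g : Y → ℝ) (x : Y') :
    finDiffComp ops (g ∘ L) x = finDiffComp (ops.map L) g (L x) := by
  induction ops generalizing x with
  | nil => rfl
  | cons s ops ih => simp [finDiff, ih]

theorem finDiffComp_map_eq_zero_of_sum_comp_eq_zero [AddZeroClass Y] [AddZeroClass Y']
    {ι : Type*} [Fintype ι] (g : ι → Y → ℝ) (L : ι → Y' →+ Y)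
    (hsum : ∀ x, ∑ i, g i (L i x) = 0) (ops : List Y') (i₀ : ι)
    (hker : ∀ i ≠ i₀, ∃ s ∈ ops, L i s = 0) (x : Y') :
    finDiffComp (ops.map (L i₀)) (g i₀) (L i₀ x) = 0 := by
  have hF : ∑ i, finDiffComp ops (g i ∘ L i) x = 0 := by
    rw [← finDiffComp_sum Finset.univ ops (fun i => g i ∘ L i)]
    simp only [Function.comp_apply, hsum]
    exact congrFun (finDiffComp_zero ops) x
  rw [Fintype.sum_eq_single i₀] at hF
  · rwa [← finDiffComp_comp_addMonoidHom]
  · intro i hi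
    obtain ⟨s, hs, hLs⟩ := hker i hi
    rw [finDiffComp_comp_addMonoidHom,
      finDiffComp_eq_zero_of_zero_mem (List.mem_map.2 ⟨s, hs, hLs⟩), Pi.zero_apply]

end FinDiff

section PairComb

variable {Y : Type*} [AddCommGroup Y]

def pairComb (c d : ℤ) : Y × Y →+ Y :=
  c • AddMonoidHom.fst Y Y + d • AddMonoidHom.snd Y Y

@[simp]
theorem pairComb_apply (c d : ℤ) (p : Y × Y) : pairComb c d p = c • p.1 + d • p.2 := rfl

theorem pairComb_smul_smul (c d e f : ℤ) (y : Y) :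
    pairComb c d (e • y, f • y) = (c * e + d * f) • y := by
  simp [add_smul, mul_smul]

theorem pairComb_smul_smul_eq_zero {c d e f : ℤ} (h : c * e + d * f = 0) (y : Y) :
    pairComb c d (e • y, f • y) = 0 := by
  rw [pairComb_smul_smul, h, zero_smul]

end PairComb

/-- If real functions `ψ j` on an Abelian group `Y` satisfy
`∑ j, ψ j (a j • u + b j • v) = ∑ j, ψ j (a j • u - b j • v)` for all `u v ∈ Y`,
then for arbitrary `h₁,…,hₙ, k₂,…,kₙ ∈ Y` the function `ψ₁` satisfies
`Δ_{m₂₁k₂}⋯Δ_{mₙ₁kₙ} Δ_{l₁₁h₁}⋯Δ_{lₙ₁hₙ} ψ₁(a₁ • u) = 0`, where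
`l_{i1} = a₁ bᵢ + b₁ aᵢ` and `m_{i1} = a₁ bᵢ - b₁ aᵢ`. -/
theorem finite_difference_elimination
    {Y : Type*} [AddCommGroup Y] (n : ℕ) (hn : 2 ≤ n)
    (ψ : Fin n → Y → ℝ) (a b : Fin n → ℤ)
    (heq : ∀ u v : Y,
      ∑ j, ψ j (a j • u + b j • v) = ∑ j, ψ j (a j • u - b j • v)) :
    ∀ (h k : Fin n → Y) (u : Y),
      finDiffComp
        ((List.ofFn fun j : Fin n => (a (⟨0, by omega⟩ : Fin n) * b j - b (⟨0, by omega⟩ : Fin n) * a j) • k j).tail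
          ++ List.ofFn fun j : Fin n => (a (⟨0, by omega⟩ : Fin n) * b j + b (⟨0, by omega⟩ : Fin n) * a j) • h j)
        (ψ (⟨0, by omega⟩ : Fin n)) (a (⟨0, by omega⟩ : Fin n) • u) = 0 := by
  intro h k u
  set z : Fin n := ⟨0, by omega⟩
  let K : Fin n → Y × Y := fun j => (b j • k j, (-a j) • k j)
  let H : Fin n → Y × Y := fun j => (b j • h j, a j • h j)
  have key := finDiffComp_map_eq_zero_of_sum_comp_eq_zero
    (Sum.elim ψ fun j => -ψ j) (Sum.elim (fun j => pairComb (a j) (b j)) fun j => pairComb (a j) (-b j))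
    (fun x => by simp [Fintype.sum_sum_type, sub_eq_add_neg, heq x.1 x.2])
    ((List.ofFn K).tail ++ List.ofFn H) (Sum.inl z) ?_ (u, 0)
  · have hops : ((List.ofFn K).tail ++ List.ofFn H).map (pairComb (a z) (b z)) =
        (List.ofFn fun j => (a z * b j - b z * a j) • k j).tail ++
          List.ofFn fun j => (a z * b j + b z * a j) • h j := by
      simp only [List.map_append, List.map_tail, List.map_ofFn]
      congr 3 <;> ext j
      · simp only [Function.comp_apply, K, pairComb_smul_smul]
        congr 1
        ring
      · simp only [Function.comp_apply, H, pairComb_smul_smul]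
    simpa [hops] using key
  · rintro (j | j) hj
    · refine ⟨K j, List.mem_append_left _ (List.apply_mem_tail_ofFn K ?_), ?_⟩
      · exact fun h0 => hj (congrArg Sum.inl (Fin.ext h0))
      · exact pairComb_smul_smul_eq_zero (by ring) _
    · refine ⟨H j, List.mem_append_right _ (List.mem_ofFn.2 ⟨j, rfl⟩), ?_⟩
      exact pairComb_smul_smul_eq_zero (by ring) _
end

section
/- Let ξ₁, ξ₂ be independent random variables on the real line with linear forms L₁ = a₁ξ₁ + a₂ξ₂, L₂ = b₁ξ₁ + b₂ξ₂ where all aⱼ, bⱼ and b₁a₂ + b₂a₁ are nonzero, and suppose b₁a₂ − b₂a₁ = 0. If the conditional distribution of L₂ given L₁ is symmetric, then ξ₁ and ξ₂ are degenerate (i.e., the case when all 'cross-determinants' vanish forces b₁L₁ = a₁L₂ and degenerate distributions). -/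
/-!
Since `b₁a₂ = b₂a₁`, `L₂ = (b₁/a₁) L₁`, so the law of `(L₁, L₂)` lives on the line
`y = (b₁/a₁) x`, while that of `(L₁, -L₂)` lives on `y = -(b₁/a₁) x`; the symmetry forces
`L₁ = 0` almost surely. Then each `ξᵢ` is almost surely a linear function of the other,
independent, one, hence independent of itself, so its law takes only the values `0` and `1`
and is a Dirac measure.
-/

open MeasureTheory ProbabilityTheory

namespace ProbabilityTheory

variable {Ω β γ : Type*} [MeasurableSpace Ω] [MeasurableSpace β] [MeasurableSpace γ]

theorem IndepFun.indepFun_self_of_ae_eq_comp {μ : Measure Ω} {X : Ω → β} {Y : Ω → γ} {f : γ → β}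
    (h : IndepFun X Y μ) (hf : Measurable f) (hXY : X =ᵐ[μ] f ∘ Y) :
    IndepFun X X μ :=
  (h.comp measurable_id hf).congr (by rfl) hXY.symm

theorem exists_map_eq_dirac_of_indepFun_self [StandardBorelSpace β] {P : Measure Ω}
    [IsProbabilityMeasure P] {X : Ω → β} (hX : Measurable X) (h : IndepFun X X P) :
    ∃ c, P.map X = Measure.dirac c := by
  have : IsProbabilityMeasure (P.map X) := Measure.isProbabilityMeasure_map hX.aemeasurable
  have : IsZeroOneMeasure (P.map X) := ⟨fun s hs => by
    rw [Measure.map_apply hX hs]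
    exact measure_eq_zero_or_one_of_indepSet_self
      ((indepFun_iff_indepSet_preimage hX hX).1 h s s hs hs)⟩
  exact IsZeroOneMeasure.exists_eq_dirac

end ProbabilityTheory

theorem ae_eq_zero_of_map_prod_mul_eq_map_prod_neg_mul {Ω : Type*} [MeasurableSpace Ω]
    {μ : Measure Ω} {X : Ω → ℝ} (hX : Measurable X) {c : ℝ} (hc : c ≠ 0)
    (h : μ.map (fun ω => (X ω, c * X ω)) = μ.map (fun ω => (X ω, -(c * X ω)))) :
    X =ᵐ[μ] 0 := by
  have hgraph : MeasurableSet {p : ℝ × ℝ | p.2 = c * p.1} :=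
    measurableSet_eq_fun measurable_snd (measurable_const.mul measurable_fst)
  have h_on_graph : ∀ᵐ p ∂μ.map (fun ω => (X ω, c * X ω)), p.2 = c * p.1 :=
    (ae_map_iff (by fun_prop) hgraph).2 (ae_of_all _ fun _ => rfl)
  rw [h, ae_map_iff (by fun_prop) hgraph] at h_on_graph
  filter_upwards [h_on_graph] with ω hω
  have : 2 * c * X ω = 0 := by linarith
  simpa [hc] using this

theorem degenerate_of_vanishing_cross_determinant_general
    {Ω : Type*} [MeasurableSpace Ω] (P : Measure Ω) [IsProbabilityMeasure P]
    (ξ₁ ξ₂ : Ω → ℝ) (hm₁ : Measurable ξ₁) (hm₂ : Measurable ξ₂)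
    (hindep : IndepFun ξ₁ ξ₂ P)
    (a₁ a₂ b₁ b₂ : ℤ)
    (ha₁ : a₁ ≠ 0) (ha₂ : a₂ ≠ 0) (hb₁ : b₁ ≠ 0)
    (hminus : b₁ * a₂ - b₂ * a₁ = 0)
    (L₁ L₂ : Ω → ℝ)
    (hL₁ : L₁ = fun ω => (a₁ : ℝ) * ξ₁ ω + (a₂ : ℝ) * ξ₂ ω)
    (hL₂ : L₂ = fun ω => (b₁ : ℝ) * ξ₁ ω + (b₂ : ℝ) * ξ₂ ω)
    (hsym : Measure.map (fun ω => (L₁ ω, L₂ ω)) P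
      = Measure.map (fun ω => (L₁ ω, -L₂ ω)) P) :
    (∃ c₁ : ℝ, Measure.map ξ₁ P = Measure.dirac c₁) ∧
    (∃ c₂ : ℝ, Measure.map ξ₂ P = Measure.dirac c₂) := by
  have ha₁' : (a₁ : ℝ) ≠ 0 := by exact_mod_cast ha₁
  have ha₂' : (a₂ : ℝ) ≠ 0 := by exact_mod_cast ha₂
  have hdet : (b₁ : ℝ) * a₂ - b₂ * a₁ = 0 := by exact_mod_cast hminus
  have hL₂_eq : L₂ = fun ω => (b₁ / a₁ : ℝ) * L₁ ω := by
    subst hL₁ hL₂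
    ext ω
    field_simp
    linear_combination (-ξ₂ ω) * hdet
  rw [hL₂_eq] at hsym
  have hL₁_zero : L₁ =ᵐ[P] 0 := ae_eq_zero_of_map_prod_mul_eq_map_prod_neg_mul
    (by rw [hL₁]; fun_prop) (div_ne_zero (by exact_mod_cast hb₁) ha₁') hsym
  have h₁ : ξ₁ =ᵐ[P] (fun y => -(a₂ / a₁ : ℝ) * y) ∘ ξ₂ := by
    filter_upwards [hL₁_zero] with ω hω
    simp only [hL₁, Pi.zero_apply] at hω
    simp only [Function.comp_apply]
    field_simp
    linear_combination hω
  have h₂ : ξ₂ =ᵐ[P] (fun x => -(a₁ / a₂ : ℝ) * x) ∘ ξ₁ := by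
    filter_upwards [hL₁_zero] with ω hω
    simp only [hL₁, Pi.zero_apply] at hω
    simp only [Function.comp_apply]
    field_simp
    linear_combination hω
  exact ⟨exists_map_eq_dirac_of_indepFun_self hm₁
      (hindep.indepFun_self_of_ae_eq_comp (by fun_prop) h₁),
    exists_map_eq_dirac_of_indepFun_self hm₂
      (hindep.symm.indepFun_self_of_ae_eq_comp (by fun_prop) h₂)⟩

/-- Heyde-type theorem on the real line in the degenerate case: if `ξ₁, ξ₂` are
independent real random variables, the integer coefficients `a₁, a₂, b₁, b₂` and
`b₁a₂ + b₂a₁` are nonzero, `b₁a₂ - b₂a₁ = 0` (so that `b₁L₁ = a₁L₂`), and the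
conditional distribution of `L₂ = b₁ξ₁ + b₂ξ₂` given `L₁ = a₁ξ₁ + a₂ξ₂` is symmetric,
then `ξ₁` and `ξ₂` are degenerate. -/
theorem degenerate_of_vanishing_cross_determinant
    {Ω : Type*} [MeasurableSpace Ω] (P : Measure Ω) [IsProbabilityMeasure P]
    (ξ₁ ξ₂ : Ω → ℝ) (hm₁ : Measurable ξ₁) (hm₂ : Measurable ξ₂)
    (hindep : IndepFun ξ₁ ξ₂ P)
    (a₁ a₂ b₁ b₂ : ℤ)
    (ha₁ : a₁ ≠ 0) (ha₂ : a₂ ≠ 0) (hb₁ : b₁ ≠ 0) (hb₂ : b₂ ≠ 0)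
    (hplus : b₁ * a₂ + b₂ * a₁ ≠ 0)
    (hminus : b₁ * a₂ - b₂ * a₁ = 0)
    (L₁ L₂ : Ω → ℝ)
    (hL₁ : L₁ = fun ω => (a₁ : ℝ) * ξ₁ ω + (a₂ : ℝ) * ξ₂ ω)
    (hL₂ : L₂ = fun ω => (b₁ : ℝ) * ξ₁ ω + (b₂ : ℝ) * ξ₂ ω)
    (hsym : Measure.map (fun ω => (L₁ ω, L₂ ω)) P
      = Measure.map (fun ω => (L₁ ω, -L₂ ω)) P) :
    (∃ c₁ : ℝ, Measure.map ξ₁ P = Measure.dirac c₁) ∧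
    (∃ c₂ : ℝ, Measure.map ξ₂ P = Measure.dirac c₂) :=
  degenerate_of_vanishing_cross_determinant_general P ξ₁ ξ₂ hm₁ hm₂ hindep a₁ a₂ b₁ b₂ ha₁ ha₂ hb₁
    hminus L₁ L₂ hL₁ hL₂ hsym
end

section
/- Let Y = ℤ(p) with p a prime, p > 3, and let y₁, y₂ ∈ Y be nonzero with y₁ ≠ ±y₂. Define f₁, f₂ : Y → ℝ by f₁(0) = 1, f₁(±y₁) = 1/2, f₁(y) = 0 otherwise, and similarly f₂ with y₂ in place of y₁. Then f₁(y)f₂(y) = g(y) where g(0) = 1 and g(y) = 0 for y ≠ 0, and f₁, f₂ satisfy f₁(u+v)f₂(u+v)f₁(u+2v)f₂(u+2v) = f₁(u−v)f₂(u−v)f₁(u−2v)f₂(u−2v) for all u, v ∈ Y. -/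
theorem mul_eq_zero_of_vanish_off_zero_pm {α R : Type*} [Zero α] [InvolutiveNeg α]
    [MulZeroClass R] {f g : α → R} {a b : α} (hab : a ≠ b) (hab' : a ≠ -b)
    (hf : ∀ y, y ≠ 0 → y ≠ a → y ≠ -a → f y = 0)
    (hg : ∀ y, y ≠ 0 → y ≠ b → y ≠ -b → g y = 0) {y : α} (hy : y ≠ 0) :
    f y * g y = 0 := by
  by_cases ha : y = a
  · subst ha
    rw [hg y hy hab hab', mul_zero]
  by_cases ha' : y = -a
  · subst ha'
    have hb : -a ≠ b := fun h => hab' (neg_eq_iff_eq_neg.mp h)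
    have hb' : -a ≠ -b := fun h => hab (neg_inj.mp h)
    rw [hg _ hy hb hb', mul_zero]
  · rw [hf y hy ha ha', zero_mul]

theorem add_eq_zero_and_add_two_mul_eq_zero_iff {R : Type*} [CommRing R] (u v : R) :
    u + v = 0 ∧ u + 2 * v = 0 ↔ u = 0 ∧ v = 0 := by
  constructor
  · rintro ⟨h₁, h₂⟩
    exact ⟨by linear_combination 2 * h₁ - h₂, by linear_combination h₂ - h₁⟩
  · rintro ⟨rfl, rfl⟩
    simp

theorem sub_eq_zero_and_sub_two_mul_eq_zero_iff {R : Type*} [CommRing R] (u v : R) :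
    u - v = 0 ∧ u - 2 * v = 0 ↔ u = 0 ∧ v = 0 := by
  simpa [sub_eq_add_neg] using add_eq_zero_and_add_two_mul_eq_zero_iff u (-v)

theorem product_char_functions_eq_indicator_and_symmetry_general
    (p : ℕ) (y₁ y₂ : ZMod p)
    (hne : y₁ ≠ y₂) (hne' : y₁ ≠ -y₂)
    (f₁ f₂ : ZMod p → ℝ)
    (hf₁0 : f₁ 0 = 1) (hf₁z : ∀ y : ZMod p, y ≠ 0 → y ≠ y₁ → y ≠ -y₁ → f₁ y = 0)
    (hf₂0 : f₂ 0 = 1) (hf₂z : ∀ y : ZMod p, y ≠ 0 → y ≠ y₂ → y ≠ -y₂ → f₂ y = 0) :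
    (∀ y : ZMod p, f₁ y * f₂ y = if y = 0 then 1 else 0) ∧
    (∀ u v : ZMod p,
      f₁ (u + v) * f₂ (u + v) * (f₁ (u + 2 * v) * f₂ (u + 2 * v))
        = f₁ (u - v) * f₂ (u - v) * (f₁ (u - 2 * v) * f₂ (u - 2 * v))) := by
  have hprod : ∀ y : ZMod p, f₁ y * f₂ y = if y = 0 then 1 else 0 := by
    intro y
    split_ifs with hy
    · rw [hy, hf₁0, hf₂0, one_mul]
    · exact mul_eq_zero_of_vanish_off_zero_pm hne hne' hf₁z hf₂z hy
  refine ⟨hprod, fun u v => ?_⟩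
  simp only [hprod, ite_zero_mul_ite_zero, add_eq_zero_and_add_two_mul_eq_zero_iff,
    sub_eq_zero_and_sub_two_mul_eq_zero_iff]

/-- Lemma 6 computation on `ℤ(p)`, `p > 3` prime: with `y₁, y₂` nonzero and
`y₁ ≠ ±y₂`, the functions `f₁` (equal to `1` at `0`, `1/2` at `±y₁`, `0` elsewhere)
and `f₂` (same with `y₂`) satisfy `f₁ f₂ = 𝟙_{0}` and the functional equation
`f₁(u+v)f₂(u+v)f₁(u+2v)f₂(u+2v) = f₁(u-v)f₂(u-v)f₁(u-2v)f₂(u-2v)`. -/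
theorem product_char_functions_eq_indicator_and_symmetry
    (p : ℕ) (hp : p.Prime) (hp3 : 3 < p)
    (y₁ y₂ : ZMod p) (hy₁ : y₁ ≠ 0) (hy₂ : y₂ ≠ 0)
    (hne : y₁ ≠ y₂) (hne' : y₁ ≠ -y₂)
    (f₁ f₂ : ZMod p → ℝ)
    (hf₁0 : f₁ 0 = 1) (hf₁y : f₁ y₁ = 1 / 2) (hf₁y' : f₁ (-y₁) = 1 / 2)
    (hf₁z : ∀ y : ZMod p, y ≠ 0 → y ≠ y₁ → y ≠ -y₁ → f₁ y = 0)
    (hf₂0 : f₂ 0 = 1) (hf₂y : f₂ y₂ = 1 / 2) (hf₂y' : f₂ (-y₂) = 1 / 2)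
    (hf₂z : ∀ y : ZMod p, y ≠ 0 → y ≠ y₂ → y ≠ -y₂ → f₂ y = 0) :
    (∀ y : ZMod p, f₁ y * f₂ y = if y = 0 then 1 else 0) ∧
    (∀ u v : ZMod p,
      f₁ (u + v) * f₂ (u + v) * (f₁ (u + 2 * v) * f₂ (u + 2 * v))
        = f₁ (u - v) * f₂ (u - v) * (f₁ (u - 2 * v) * f₂ (u - 2 * v))) :=
  product_char_functions_eq_indicator_and_symmetry_general p y₁ y₂ hne hne' f₁ f₂ hf₁0 hf₁z hf₂0
    hf₂z
end

section
/- Let μ₁ = μ₃ = ν₁ and μ₂ = μ₄ = ν₂ be distributions on ℤ(p) (p > 3 prime) with characteristic functions ν̂₁ supported on {0, ±y₁} with values 1, 1/2, 1/2, and ν̂₂ supported on {0, ±y₂} with values 1, 1/2, 1/2, where y₁, y₂ are nonzero and y₁ ≠ ±y₂. If ξ₁, ξ₂, ξ₃, ξ₄ are independent with distributions μ₁,…,μ₄, then the conditional distribution of L₂ = ξ₁ + ξ₂ + 2ξ₃ + 2ξ₄ given L₁ = ξ₁ + ξ₂ + ξ₃ + ξ₄ is symmetric, and none of the μⱼ is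 an idempotent (shift of a Haar measure of a subgroup). -/
/-!
The characteristic functions of `ν₁` and `ν₂` have disjoint supports away from `0`, so
`ξ₁ + ξ₂` and `ξ₃ + ξ₄` have characteristic function `𝟙_{0}`: they are independent and uniform
on `ℤ(p)`. The pair `(L₁, L₂)` is their image under the invertible shear
`(s, t) ↦ (s + t, s + 2t)`, hence uniform on `ℤ(p)²`, and so invariant under `L₂ ↦ -L₂`.
No `μⱼ` is idempotent: the characteristic function of a shifted Haar measure of a subgroup
has modulus `0` or `1` everywhere, whereas `|μ̂ⱼ(yⱼ)| = 1/2`.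
-/

open MeasureTheory ProbabilityTheory

namespace ZMod

variable {N : ℕ} [NeZero N]

lemma exp_val_mul_val_eq_stdAddChar (x y : ZMod N) :
    Complex.exp (2 * (Real.pi : ℂ) * Complex.I * (x.val : ℂ) * (y.val : ℂ) / (N : ℂ))
      = stdAddChar (y * x) := by
  have hcast : (((y.val * x.val : ℕ) : ℤ) : ZMod N) = y * x := by
    push_cast
    simp only [natCast_zmod_val]
  rw [← hcast, stdAddChar_coe]
  push_cast
  ring_nf

variable [MeasurableSpace (ZMod N)]

noncomputable def charFun (μ : Measure (ZMod N)) (y : ZMod N) : ℂ :=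
  ∫ x, stdAddChar (y * x) ∂μ

variable [MeasurableSingletonClass (ZMod N)]

lemma charFun_eq_sum (μ : Measure (ZMod N)) [IsFiniteMeasure μ] (y : ZMod N) :
    charFun μ y = ∑ x, stdAddChar (y * x) * (μ.real {x} : ℂ) := by
  rw [charFun, integral_fintype .of_finite]
  simp only [Complex.real_smul, mul_comm]

lemma charFun_map_add_eq_mul {Ω : Type*} [MeasurableSpace Ω] {P : Measure Ω}
    {X Y : Ω → ZMod N} (hXY : IndepFun X Y P) (hX : Measurable X) (hY : Measurable Y)
    (y : ZMod N) :
    charFun (P.map (X + Y)) y = charFun (P.map X) y * charFun (P.map Y) y := by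
  simp only [charFun]
  rw [integral_map (hX.add hY).aemeasurable .of_discrete,
    integral_map hX.aemeasurable .of_discrete, integral_map hY.aemeasurable .of_discrete]
  simp only [Pi.add_apply, mul_add, AddChar.map_add_eq_mul]
  exact hXY.integral_fun_comp_mul_comp (f := fun x ↦ stdAddChar (y * x))
    (g := fun x ↦ stdAddChar (y * x)) hX.aemeasurable hY.aemeasurable .of_discrete .of_discrete

lemma measureReal_singleton_eq_sum_charFun (μ : Measure (ZMod N)) [IsFiniteMeasure μ]
    (x : ZMod N) :
    (μ.real {x} : ℂ) = (N : ℂ)⁻¹ * ∑ y, stdAddChar (y * x) * charFun μ (-y) := by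
  have h := congrFun ((dft (E := ℂ)).symm_apply_apply fun x ↦ (μ.real {x} : ℂ)) x
  rw [← h, invDFT_apply, smul_eq_mul]
  congr 2 with y
  rw [dft_apply, charFun_eq_sum, smul_eq_mul]
  congr 1
  exact Finset.sum_congr rfl fun j _ ↦ by rw [smul_eq_mul, neg_mul, mul_comm j]

lemma measure_singleton_eq_inv_of_charFun_eq_ite (μ : Measure (ZMod N)) [IsFiniteMeasure μ]
    (hμ : ∀ y, charFun μ y = if y = 0 then 1 else 0) (x : ZMod N) :
    μ {x} = (N : ENNReal)⁻¹ := by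
  have h := measureReal_singleton_eq_sum_charFun μ x
  simp only [hμ, neg_eq_zero, mul_ite, mul_one, mul_zero, Finset.sum_ite_eq',
    Finset.mem_univ, if_true, zero_mul, AddChar.map_zero_eq_one] at h
  have hreal : μ.real {x} = (N : ℝ)⁻¹ := Complex.ofReal_injective (by push_cast; exact h)
  rw [← ofReal_measureReal, hreal, ENNReal.ofReal_inv_of_pos (Nat.cast_pos.2 (NeZero.pos N)),
    ENNReal.ofReal_natCast]

lemma norm_charFun_map_add_haar_eq_zero_or_one (H : AddSubgroup (ZMod N)) (x₀ y : ZMod N) :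
    ‖charFun (Measure.map (fun h : H ↦ x₀ + (h : ZMod N))
        ((Nat.card H : ENNReal)⁻¹ • Measure.count)) y‖ = 0 ∨
    ‖charFun (Measure.map (fun h : H ↦ x₀ + (h : ZMod N))
        ((Nat.card H : ENNReal)⁻¹ • Measure.count)) y‖ = 1 := by
  classical
  set χ : AddChar H ℂ := (stdAddChar.mulShift y).compAddMonoidHom H.subtype
  have hsum : charFun (Measure.map (fun h : H ↦ x₀ + (h : ZMod N))
      ((Nat.card H : ENNReal)⁻¹ • Measure.count)) y
        = ((Nat.card H : ℝ)⁻¹ * stdAddChar (y * x₀)) * ∑ h, χ h := by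
    rw [charFun, integral_map (measurable_of_finite _).aemeasurable .of_discrete,
      integral_smul_measure, integral_count, Finset.mul_sum, Finset.smul_sum]
    refine Finset.sum_congr rfl fun h _ ↦ ?_
    simp [χ, mul_add, AddChar.map_add_eq_mul, mul_assoc]
  rw [hsum, AddChar.sum_eq_ite]
  split_ifs
  · right
    simp [Nat.card_eq_fintype_card]
  · left
    simp

end ZMod

lemma ite_mul_ite_of_ne_of_ne_neg {G : Type*} [AddGroup G] [DecidableEq G] {a b : G}
    (hab : a ≠ b) (hab' : a ≠ -b) (y : G) :
    ((if y = 0 then 1 else if y = a ∨ y = -a then 1 / 2 else 0) : ℂ)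
      * (if y = 0 then 1 else if y = b ∨ y = -b then 1 / 2 else 0)
      = if y = 0 then 1 else 0 := by
  have hdisj : ¬ ((y = a ∨ y = -a) ∧ (y = b ∨ y = -b)) := by
    rintro ⟨ha | ha, hb | hb⟩
    · exact hab (ha.symm.trans hb)
    · exact hab' (ha.symm.trans hb)
    · exact hab' (neg_eq_iff_eq_neg.1 (ha.symm.trans hb))
    · exact hab (neg_inj.1 (ha.symm.trans hb))
  split_ifs <;> simp_all

def shearEquiv (R : Type*) [CommRing R] : R × R ≃ R × R where
  toFun z := (z.1 + z.2, z.1 + 2 * z.2)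
  invFun z := (2 * z.1 - z.2, z.2 - z.1)
  left_inv z := by ext <;> simp <;> ring
  right_inv z := by ext <;> simp <;> ring

namespace MeasureTheory.Measure

variable {α : Type*} [MeasurableSpace α] [MeasurableSingletonClass α] [Countable α]

lemma map_equiv_eq_self_of_measure_singleton_const {μ : Measure α}
    (hμ : ∀ a b, μ {a} = μ {b}) (e : α ≃ α) : μ.map e = μ := by
  refine ext_of_singleton fun a ↦ ?_
  rw [map_apply (measurable_of_countable e) (measurableSet_singleton a),
    ← Equiv.image_symm_eq_preimage, Set.image_singleton]
  exact hμ _ _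

end MeasureTheory.Measure

namespace ProbabilityTheory

variable {Ω : Type*} [MeasurableSpace Ω] {P : Measure Ω} [IsFiniteMeasure P]

lemma IndepFun.measure_map_prod_singleton_const {α β : Type*} [MeasurableSpace α]
    [MeasurableSpace β] [MeasurableSingletonClass α] [MeasurableSingletonClass β]
    {X : Ω → α} {Y : Ω → β} (hXY : IndepFun X Y P) (hX : Measurable X) (hY : Measurable Y)
    (hXc : ∀ a a', P.map X {a} = P.map X {a'}) (hYc : ∀ b b', P.map Y {b} = P.map Y {b'})
    (z w : α × β) :
    P.map (fun ω ↦ (X ω, Y ω)) {z} = P.map (fun ω ↦ (X ω, Y ω)) {w} := by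
  rw [hXY.map_prod_eq_prod_map_map hX.aemeasurable hY.aemeasurable, ← Prod.mk.eta (p := z),
    ← Prod.mk.eta (p := w), ← Set.singleton_prod_singleton, ← Set.singleton_prod_singleton,
    Measure.prod_prod, Measure.prod_prod, hXc z.1 w.1, hYc z.2 w.2]

lemma map_add_add_two_mul_eq_map_neg {R : Type*} [CommRing R] [Countable R] [MeasurableSpace R]
    [MeasurableSingletonClass R] {S T : Ω → R} (hST : IndepFun S T P)
    (hS : Measurable S) (hT : Measurable T)
    (hSc : ∀ s s', P.map S {s} = P.map S {s'}) (hTc : ∀ t t', P.map T {t} = P.map T {t'}) :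
    P.map (fun ω ↦ (S ω + T ω, S ω + 2 * T ω))
      = P.map (fun ω ↦ (S ω + T ω, -(S ω + 2 * T ω))) := by
  have hc := hST.measure_map_prod_singleton_const hS hT hSc hTc
  let reflect : R × R ≃ R × R := (Equiv.refl R).prodCongr (Equiv.neg R)
  have hmeas : Measurable fun ω ↦ (S ω, T ω) := hS.prodMk hT
  calc P.map (fun ω ↦ (S ω + T ω, S ω + 2 * T ω))
      = (P.map fun ω ↦ (S ω, T ω)).map (shearEquiv R) := by
        rw [Measure.map_map (measurable_of_countable _) hmeas]; rfl
    _ = (P.map fun ω ↦ (S ω, T ω)).map ((shearEquiv R).trans reflect) := by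
        rw [Measure.map_equiv_eq_self_of_measure_singleton_const hc,
          Measure.map_equiv_eq_self_of_measure_singleton_const hc]
    _ = P.map (fun ω ↦ (S ω + T ω, -(S ω + 2 * T ω))) := by
        rw [Measure.map_map (measurable_of_countable _) hmeas]; rfl

end ProbabilityTheory

theorem heyde_counterexample_on_cyclic_group_general
    (p : ℕ) [NeZero p]
    [MeasurableSpace (ZMod p)] [MeasurableSingletonClass (ZMod p)]
    (y₁ y₂ : ZMod p) (hy₁ : y₁ ≠ 0) (hy₂ : y₂ ≠ 0)
    (hne : y₁ ≠ y₂) (hne' : y₁ ≠ -y₂)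
    (e : ZMod p → ZMod p → ℂ)
    (he : ∀ x y : ZMod p,
      e x y = Complex.exp (2 * (Real.pi : ℂ) * Complex.I * (x.val : ℂ) * (y.val : ℂ) / (p : ℂ)))
    {Ω : Type*} [MeasurableSpace Ω] (P : Measure Ω) [IsProbabilityMeasure P]
    (ξ : Fin 4 → Ω → ZMod p) (hmeas : ∀ j, Measurable (ξ j))
    (hindep : iIndepFun ξ P)
    (c : Fin 4 → ZMod p) (hc : c = ![y₁, y₂, y₁, y₂])
    (hchar : ∀ (j : Fin 4) (y : ZMod p),
      ∑ x : ZMod p, e x y * ((Measure.map (ξ j) P {x}).toReal : ℂ)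
        = if y = 0 then 1 else if y = c j ∨ y = -(c j) then 1 / 2 else 0) :
    Measure.map (fun ω => (ξ 0 ω + ξ 1 ω + ξ 2 ω + ξ 3 ω,
        ξ 0 ω + ξ 1 ω + 2 * ξ 2 ω + 2 * ξ 3 ω)) P
      = Measure.map (fun ω => (ξ 0 ω + ξ 1 ω + ξ 2 ω + ξ 3 ω,
        -(ξ 0 ω + ξ 1 ω + 2 * ξ 2 ω + 2 * ξ 3 ω))) P
    ∧ ∀ j : Fin 4,
        ¬ ∃ (H : AddSubgroup (ZMod p)) (x₀ : ZMod p),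
          Measure.map (ξ j) P
            = Measure.map (fun h : H => x₀ + (h : ZMod p))
                ((Nat.card H : ENNReal)⁻¹ • Measure.count) := by
  have hchar' : ∀ j y, ZMod.charFun (P.map (ξ j)) y
      = if y = 0 then 1 else if y = c j ∨ y = -(c j) then 1 / 2 else 0 := by
    intro j y
    rw [← hchar j y, ZMod.charFun_eq_sum]
    simp only [he, ZMod.exp_val_mul_val_eq_stdAddChar, measureReal_def]
  have huniform : ∀ i j, i ≠ j → c i = y₁ → c j = y₂ →
      ∀ s, P.map (ξ i + ξ j) {s} = (p : ENNReal)⁻¹ := by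
    intro i j hij hi hj
    refine ZMod.measure_singleton_eq_inv_of_charFun_eq_ite _ fun y ↦ ?_
    rw [ZMod.charFun_map_add_eq_mul (hindep.indepFun hij) (hmeas i) (hmeas j), hchar', hchar',
      hi, hj, ite_mul_ite_of_ne_of_ne_neg hne hne']
  have hS := huniform 0 1 (by decide) (by simp [hc]) (by simp [hc])
  have hT := huniform 2 3 (by decide) (by simp [hc]) (by simp [hc])
  refine ⟨?_, fun j ⟨H, x₀, hH⟩ ↦ ?_⟩
  · have hsym := map_add_add_two_mul_eq_map_neg
      (hindep.indepFun_add_add hmeas 0 1 2 3 (by decide) (by decide) (by decide) (by decide))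
      ((hmeas 0).add (hmeas 1)) ((hmeas 2).add (hmeas 3))
      (fun s s' ↦ by rw [hS, hS]) (fun t t' ↦ by rw [hT, hT])
    convert hsym using 4 <;> simp only [Pi.add_apply] <;> ring
  · have hcj : c j ≠ 0 := by fin_cases j <;> simp [hc, hy₁, hy₂]
    have h := ZMod.norm_charFun_map_add_haar_eq_zero_or_one H x₀ (c j)
    rw [← hH, hchar', if_neg hcj, if_pos (Or.inl rfl)] at h
    norm_num at h

/-- Lemma 6 of the paper: on `X = ℤ(p)`, `p > 3` prime, let `ξ₁, ξ₂, ξ₃, ξ₄` be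
independent random variables with distributions `μ₁ = μ₃ = ν₁`, `μ₂ = μ₄ = ν₂`, where
`ν̂₁` equals `1` at `0`, `1/2` at `±y₁` and `0` elsewhere and `ν̂₂` is analogous with
`y₂`, with `y₁, y₂` nonzero and `y₁ ≠ ±y₂`.  Then the conditional distribution of
`L₂ = ξ₁ + ξ₂ + 2ξ₃ + 2ξ₄` given `L₁ = ξ₁ + ξ₂ + ξ₃ + ξ₄` is symmetric, and no `μⱼ`
is a shift of the Haar distribution of a subgroup of `ℤ(p)`. -/
theorem heyde_counterexample_on_cyclic_group
    (p : ℕ) [NeZero p] (hp : p.Prime) (hp3 : 3 < p)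
    [MeasurableSpace (ZMod p)] [MeasurableSingletonClass (ZMod p)]
    (y₁ y₂ : ZMod p) (hy₁ : y₁ ≠ 0) (hy₂ : y₂ ≠ 0)
    (hne : y₁ ≠ y₂) (hne' : y₁ ≠ -y₂)
    (e : ZMod p → ZMod p → ℂ)
    (he : ∀ x y : ZMod p,
      e x y = Complex.exp (2 * (Real.pi : ℂ) * Complex.I * (x.val : ℂ) * (y.val : ℂ) / (p : ℂ)))
    {Ω : Type*} [MeasurableSpace Ω] (P : Measure Ω) [IsProbabilityMeasure P]
    (ξ : Fin 4 → Ω → ZMod p) (hmeas : ∀ j, Measurable (ξ j))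
    (hindep : iIndepFun ξ P)
    (c : Fin 4 → ZMod p) (hc : c = ![y₁, y₂, y₁, y₂])
    (hchar : ∀ (j : Fin 4) (y : ZMod p),
      ∑ x : ZMod p, e x y * ((Measure.map (ξ j) P {x}).toReal : ℂ)
        = if y = 0 then 1 else if y = c j ∨ y = -(c j) then 1 / 2 else 0) :
    Measure.map (fun ω => (ξ 0 ω + ξ 1 ω + ξ 2 ω + ξ 3 ω,
        ξ 0 ω + ξ 1 ω + 2 * ξ 2 ω + 2 * ξ 3 ω)) P
      = Measure.map (fun ω => (ξ 0 ω + ξ 1 ω + ξ 2 ω + ξ 3 ω,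
        -(ξ 0 ω + ξ 1 ω + 2 * ξ 2 ω + 2 * ξ 3 ω))) P
    ∧ ∀ j : Fin 4,
        ¬ ∃ (H : AddSubgroup (ZMod p)) (x₀ : ZMod p),
          Measure.map (ξ j) P
            = Measure.map (fun h : H => x₀ + (h : ZMod p))
                ((Nat.card H : ENNReal)⁻¹ • Measure.count) :=
  heyde_counterexample_on_cyclic_group_general p y₁ y₂ hy₁ hy₂ hne hne' e he P ξ hmeas hindep c hc
    hchar
end
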